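/- arXiv:0801.4283 — 4 statements merged into one kernel-verified Lean document; each statement's English description precedes it below -/
import Mathlib

section
/- Let φ : ℂ → ℂ² be the map t ↦ (t^d, (t-1)^(d-1)) for d ≥ 1. Then for t ≠ s, φ(t) = φ(s) if and only if there exist a d-th root of unity ξ ≠ 1 and a (d-1)-th root of unity η ≠ 1 such that t = (1 - η)/(ξ - η) and s = ξ·t. -/
/-! Since `t ≠ s`, the equation `t ^ d = s ^ d` says `s = ξ t` for a `d`-th root of unity `ξ ≠ 1`,
and likewise `s - 1 = η (t - 1)` for a `(d-1)`-th root of unity `η ≠ 1`; these two linear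
relations have the unique solution `t = (1 - η) / (ξ - η)`. -/

theorem exists_pow_eq_one_of_pow_eq_pow {G : Type*} [CommGroupWithZero G] {n : ℕ} (hn : n ≠ 0)
    {a b : G} (hab : a ≠ b) (h : a ^ n = b ^ n) : ∃ ζ : G, ζ ^ n = 1 ∧ ζ ≠ 1 ∧ b = ζ * a := by
  have ha : a ≠ 0 := by
    rintro rfl
    rw [zero_pow hn, eq_comm, pow_eq_zero_iff hn] at h
    exact hab h.symm
  refine ⟨b / a, ?_, fun h1 => hab ((div_eq_one_iff_eq ha).mp h1).symm, (div_mul_cancel₀ b ha).symm⟩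
  rw [div_pow, ← h, div_self (pow_ne_zero n ha)]

theorem mul_sub_one_eq_mul_sub_one_iff {K : Type*} [Field K] {ξ η t : K} (hξη : ξ ≠ η) :
    ξ * t - 1 = η * (t - 1) ↔ t = (1 - η) / (ξ - η) := by
  rw [eq_div_iff (sub_ne_zero.mpr hξη)]
  constructor <;> intro h <;> linear_combination h

/-- For `φ t = (t^d, (t-1)^(d-1))` with `d ≥ 1` and `t ≠ s`, one has `φ t = φ s` iff
there are roots of unity `ξ^d = 1, ξ ≠ 1` and `η^(d-1) = 1, η ≠ 1` with
`t = (1 - η)/(ξ - η)` and `s = ξ * t`. -/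
theorem stmt_0 (d : ℕ) (hd : 1 ≤ d) (t s : ℂ) (hts : t ≠ s) :
    (t ^ d = s ^ d ∧ (t - 1) ^ (d - 1) = (s - 1) ^ (d - 1)) ↔
      ∃ ξ η : ℂ, ξ ^ d = 1 ∧ ξ ≠ 1 ∧ η ^ (d - 1) = 1 ∧ η ≠ 1 ∧
        t = (1 - η) / (ξ - η) ∧ s = ξ * t := by
  constructor
  · rintro ⟨hpow, hpow_sub⟩
    have hd1 : d - 1 ≠ 0 := fun h => hts (by simpa [show d = 1 by omega] using hpow)
    obtain ⟨ξ, hξ, hξ1, rfl⟩ := exists_pow_eq_one_of_pow_eq_pow (by omega) hts hpow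
    obtain ⟨η, hη, hη1, hsη⟩ :=
      exists_pow_eq_one_of_pow_eq_pow hd1 (sub_left_injective.ne hts) hpow_sub
    have hξη : ξ ≠ η := by
      rintro rfl
      exact hξ1 (by linear_combination hsη)
    exact ⟨ξ, η, hξ, hξ1, hη, hη1, (mul_sub_one_eq_mul_sub_one_iff hξη).mp hsη, rfl⟩
  · rintro ⟨ξ, η, hξ, -, hη, -, ht, hs⟩
    have hξη : ξ ≠ η := by
      rintro rfl
      rw [sub_self, div_zero] at ht
      exact hts (by rw [hs, ht, mul_zero])
    refine ⟨by rw [hs, mul_pow, hξ, one_mul], ?_⟩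
    rw [hs, (mul_sub_one_eq_mul_sub_one_iff hξη).mpr ht, mul_pow, hη, one_mul]
end

section
/- Let φ(t) = (t^d, (t-1)^(d-1)) for t ∈ ℝ and d ≥ 2. If t ≠ s are real numbers, then φ(t) ≠ φ(s). -/
/-- For `d ≥ 2`, the map `t ↦ (t^d, (t-1)^(d-1))` is injective on the real line:
if `t ≠ s` are real then `φ t ≠ φ s`. -/
theorem stmt_1 (d : ℕ) (hd : 2 ≤ d) (t s : ℝ) (hts : t ≠ s) :
    ¬ (t ^ d = s ^ d ∧ (t - 1) ^ (d - 1) = (s - 1) ^ (d - 1)) := by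
  rintro ⟨h1, h2⟩
  rcases Nat.even_or_odd d with he | ho
  · -- d even, so d-1 odd
    have hod : Odd (d - 1) := Nat.Even.sub_odd (le_trans (by norm_num) hd) he (by norm_num)
    have : t - 1 = s - 1 := hod.strictMono_pow.injective h2
    exact hts (by linarith)
  · exact hts (ho.strictMono_pow.injective h1)
end

section
/- The number of pairs {t, s} with t ≠ s and φ(t) = φ(s), where φ(t) = (t^d, (t-1)^(d-1)), is exactly (d-1)(d-2)/2. -/
/-!
An ordered collision `(t, s)` of `t ↦ (t ^ d, (t - 1) ^ (d - 1))` is determined by the ratios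
`ξ = s / t` and `η = (s - 1) / (t - 1)`, which are a nontrivial `d`-th and a nontrivial
`(d - 1)`-th root of unity; conversely any such `(ξ, η)` gives back `t = (1 - η) / (ξ - η)` and
`s = ξ t`. Hence there are `(d - 1)(d - 2)` ordered collisions, and every unordered pair is
counted twice.
-/

open Set Polynomial

theorem Set.ncard_eq_two_mul_ncard_image_pair {α : Type*} {R : Set (α × α)} (hR : R.Finite)
    (hswap : ∀ p ∈ R, p.swap ∈ R) (hne : ∀ p ∈ R, p.1 ≠ p.2) :
    R.ncard = 2 * ((fun p => ({p.1, p.2} : Set α)) '' R).ncard := by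
  classical
  lift R to Finset (α × α) using hR
  have hfibre : ∀ p ∈ R, (R.filter fun q => ({q.1, q.2} : Set α) = {p.1, p.2}).card = 2 := by
    intro p hp
    have : R.filter (fun q => ({q.1, q.2} : Set α) = {p.1, p.2}) = {p, p.swap} := by
      ext ⟨x, y⟩
      simp only [Finset.mem_filter, Finset.mem_insert, Finset.mem_singleton, Set.pair_eq_pair_iff,
        Prod.ext_iff, Prod.fst_swap, Prod.snd_swap]
      constructor
      · exact fun h => h.2
      · rintro (⟨rfl, rfl⟩ | ⟨rfl, rfl⟩)
        · exact ⟨hp, Or.inl ⟨rfl, rfl⟩⟩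
        · exact ⟨hswap p hp, Or.inr ⟨rfl, rfl⟩⟩
    rw [this, Finset.card_pair]
    exact fun h => hne p hp (congrArg Prod.fst h)
  rw [← Finset.coe_image, ncard_coe_finset, ncard_coe_finset,
    Finset.card_eq_sum_card_image (fun p => ({p.1, p.2} : Set α)) R,
    Finset.sum_const_nat (m := 2), mul_comm]
  simpa only [Finset.forall_mem_image] using hfibre

section

variable {R : Type*} [CommRing R] [IsDomain R] {k : ℕ}

theorem finite_setOf_pow_eq_one_ne_one (hk : 0 < k) : {ξ : R | ξ ^ k = 1 ∧ ξ ≠ 1}.Finite :=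
  (nthRootsFinset k (1 : R)).finite_toSet.subset fun _ hξ => (mem_nthRootsFinset hk 1).2 hξ.1

theorem IsPrimitiveRoot.ncard_setOf_pow_eq_one_ne_one {ζ : R} (hζ : IsPrimitiveRoot ζ k)
    (hk : 0 < k) : {ξ : R | ξ ^ k = 1 ∧ ξ ≠ 1}.ncard = k - 1 := by
  classical
  have : {ξ : R | ξ ^ k = 1 ∧ ξ ≠ 1} = ↑((nthRootsFinset k (1 : R)).erase 1) := by
    ext ξ
    simp [Polynomial.mem_nthRootsFinset hk]
  rw [this, ncard_coe_finset,
    Finset.card_erase_of_mem (by simp [Polynomial.mem_nthRootsFinset hk]), hζ.card_nthRootsFinset]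

end

section

variable (K : Type*) [Field K] (n : ℕ)

-- With `d = n + 1`, the ordered pairs of distinct points with the same image under `φ`.
def collisions : Set (K × K) :=
  {p | p.1 ≠ p.2 ∧ p.1 ^ (n + 1) = p.2 ^ (n + 1) ∧ (p.1 - 1) ^ n = (p.2 - 1) ^ n}

def rootPairs : Set (K × K) :=
  {ξ | ξ ^ (n + 1) = 1 ∧ ξ ≠ 1} ×ˢ {η | η ^ n = 1 ∧ η ≠ 1}

variable {K n}

def collisionRatios (p : K × K) : K × K := (p.2 / p.1, (p.2 - 1) / (p.1 - 1))

-- Solves `s = ξ t`, `s - 1 = η (t - 1)` for `(t, s)`.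
def collisionOfRatios (q : K × K) : K × K :=
  ((1 - q.2) / (q.1 - q.2), q.1 * ((1 - q.2) / (q.1 - q.2)))

lemma collisions_zero : collisions K 0 = ∅ :=
  eq_empty_of_forall_notMem fun _ hp => hp.1 (by simpa using hp.2.1)

lemma swap_mem_collisions {p : K × K} (hp : p ∈ collisions K n) : p.swap ∈ collisions K n :=
  ⟨hp.1.symm, hp.2.1.symm, hp.2.2.symm⟩

lemma fst_ne_zero_of_mem_collisions {p : K × K} (hp : p ∈ collisions K n) : p.1 ≠ 0 := by
  obtain ⟨hne, hpow, -⟩ := hp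
  rintro h
  rw [h, zero_pow n.succ_ne_zero, eq_comm, pow_eq_zero_iff n.succ_ne_zero] at hpow
  exact hne (h.trans hpow.symm)

lemma fst_ne_one_of_mem_collisions (hn : n ≠ 0) {p : K × K} (hp : p ∈ collisions K n) :
    p.1 ≠ 1 := by
  obtain ⟨hne, -, hpow⟩ := hp
  rintro h
  rw [h, sub_self, zero_pow hn, eq_comm, pow_eq_zero_iff hn, sub_eq_zero] at hpow
  exact hne (h.trans hpow.symm)

lemma fst_ne_snd_of_mem_rootPairs {q : K × K} (hq : q ∈ rootPairs K n) : q.1 ≠ q.2 := by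
  obtain ⟨⟨hξ, hξ1⟩, hη, -⟩ := hq
  intro h
  rw [pow_succ, h, hη, one_mul] at hξ
  exact hξ1 (h ▸ hξ)

lemma mapsTo_collisionRatios (hn : n ≠ 0) :
    MapsTo collisionRatios (collisions K n) (rootPairs K n) := by
  rintro ⟨t, s⟩ hp
  have ht0 : t ≠ 0 := fst_ne_zero_of_mem_collisions hp
  have ht1 : t - 1 ≠ 0 := sub_ne_zero.2 (fst_ne_one_of_mem_collisions hn hp)
  obtain ⟨hne, hpow, hpow1⟩ := hp
  simp only [collisionRatios, rootPairs, mem_prod, mem_ofPred_eq, div_pow, ← hpow, ← hpow1,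
    div_self (pow_ne_zero _ ht0), div_self (pow_ne_zero _ ht1), ne_eq, div_eq_one_iff_eq ht0,
    div_eq_one_iff_eq ht1, sub_left_inj, true_and]
  exact ⟨Ne.symm hne, Ne.symm hne⟩

lemma mapsTo_collisionOfRatios : MapsTo collisionOfRatios (rootPairs K n) (collisions K n) := by
  rintro ⟨ξ, η⟩ hq
  have hξη : ξ - η ≠ 0 := sub_ne_zero.2 (fst_ne_snd_of_mem_rootPairs hq)
  obtain ⟨⟨hξ, hξ1⟩, hη, hη1⟩ := hq
  set t := (1 - η) / (ξ - η)
  have ht0 : t ≠ 0 := div_ne_zero (sub_ne_zero.2 hη1.symm) hξη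
  have hs : ξ * t - 1 = η * (t - 1) := by
    linear_combination (div_mul_cancel₀ (1 - η) hξη : t * (ξ - η) = 1 - η)
  refine ⟨fun h => hξ1 ((mul_eq_right₀ ht0).1 h.symm), ?_, ?_⟩
  · change t ^ (n + 1) = (ξ * t) ^ (n + 1)
    rw [mul_pow, hξ, one_mul]
  · change (t - 1) ^ n = (ξ * t - 1) ^ n
    rw [hs, mul_pow, hη, one_mul]

lemma invOn_collisionOfRatios (hn : n ≠ 0) :
    InvOn collisionOfRatios collisionRatios (collisions K n) (rootPairs K n) := by
  constructor
  · rintro ⟨t, s⟩ hp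
    have hden := sub_ne_zero.2 (fst_ne_snd_of_mem_rootPairs (mapsTo_collisionRatios hn hp))
    have ht0 : t ≠ 0 := fst_ne_zero_of_mem_collisions hp
    have ht1 : t - 1 ≠ 0 := sub_ne_zero.2 (fst_ne_one_of_mem_collisions hn hp)
    simp only [collisionRatios] at hden
    have key : (1 - (s - 1) / (t - 1)) / (s / t - (s - 1) / (t - 1)) = t := by
      rw [div_eq_iff hden]
      field_simp
      ring
    simp only [collisionOfRatios, collisionRatios, key, div_mul_cancel₀ _ ht0]
  · rintro ⟨ξ, η⟩ hq
    have hξη : ξ - η ≠ 0 := sub_ne_zero.2 (fst_ne_snd_of_mem_rootPairs hq)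
    obtain ⟨⟨-, hξ1⟩, -, hη1⟩ := hq
    set t := (1 - η) / (ξ - η)
    have htη : t * (ξ - η) = 1 - η := div_mul_cancel₀ (1 - η) hξη
    have ht0 : t ≠ 0 := div_ne_zero (sub_ne_zero.2 hη1.symm) hξη
    have ht1 : t - 1 ≠ 0 := fun h => hξ1 (by linear_combination htη - (ξ - η) * h)
    simp only [collisionOfRatios, collisionRatios, Prod.mk.injEq]
    exact ⟨mul_div_cancel_right₀ ξ ht0,
      (div_eq_iff ht1).2 (by linear_combination htη)⟩

lemma bijOn_collisionRatios (hn : n ≠ 0) :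
    BijOn collisionRatios (collisions K n) (rootPairs K n) :=
  (invOn_collisionOfRatios hn).bijOn (mapsTo_collisionRatios hn) mapsTo_collisionOfRatios

lemma finite_collisions (hn : n ≠ 0) : (collisions K n).Finite :=
  (bijOn_collisionRatios hn).finite_iff_finite.2 <|
    (finite_setOf_pow_eq_one_ne_one n.succ_pos).prod
      (finite_setOf_pow_eq_one_ne_one (Nat.pos_of_ne_zero hn))

end

lemma ncard_collisions_complex {n : ℕ} (hn : n ≠ 0) :
    (collisions ℂ n).ncard = n * (n - 1) := by
  rw [(bijOn_collisionRatios hn).ncard_eq, rootPairs, ncard_prod,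
    (Complex.isPrimitiveRoot_exp _ n.succ_ne_zero).ncard_setOf_pow_eq_one_ne_one n.succ_pos,
    (Complex.isPrimitiveRoot_exp _ hn).ncard_setOf_pow_eq_one_ne_one (Nat.pos_of_ne_zero hn),
    Nat.succ_sub_one]

/-- The number of unordered pairs `{t, s}` of distinct complex numbers with
`φ t = φ s`, where `φ t = (t^d, (t-1)^(d-1))`, is exactly `(d-1)(d-2)/2`. -/
theorem stmt_2 (d : ℕ) (hd : 1 ≤ d) :
    Set.ncard {S : Set ℂ | ∃ t s : ℂ, t ≠ s ∧ S = {t, s} ∧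
        t ^ d = s ^ d ∧ (t - 1) ^ (d - 1) = (s - 1) ^ (d - 1)} =
      (d - 1) * (d - 2) / 2 := by
  obtain ⟨n, rfl⟩ := Nat.exists_eq_add_of_le' hd
  have hset : {S : Set ℂ | ∃ t s : ℂ, t ≠ s ∧ S = {t, s} ∧
      t ^ (n + 1) = s ^ (n + 1) ∧ (t - 1) ^ (n + 1 - 1) = (s - 1) ^ (n + 1 - 1)} =
      (fun p => ({p.1, p.2} : Set ℂ)) '' collisions ℂ n := by
    ext S
    simp only [Nat.add_sub_cancel, collisions, mem_ofPred_eq, mem_image, Prod.exists]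
    grind
  rw [hset, Nat.add_sub_cancel, show n + 1 - 2 = n - 1 by omega]
  rcases eq_or_ne n 0 with rfl | hn
  · simp [collisions_zero]
  · have h := ncard_eq_two_mul_ncard_image_pair (finite_collisions (K := ℂ) hn)
      (fun _ => swap_mem_collisions) (fun _ hp => hp.1)
    rw [ncard_collisions_complex hn] at h
    omega
end

section
/- Let P : ℝ[x₁,...,xₙ] be a polynomial and p ∈ ℝⁿ a point where P and all its first partial derivatives vanish but the Hessian matrix H_P(p) is invertible (nondegenerate critical point on the zero locus). Define P̃ = P + Σᵢ εᵢ xᵢ ∂P/∂xᵢ. If p ≠ 0, then for a suitable choice of arbitrarily small εᵢ, some first partial derivative of P̃ does not vanish at p; i.e., p is a nonsingular point of the hypersurface P̃ = 0. -/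
open MvPolynomial

/-- Brusotti-type smoothing of a solitary ordinary double point: if `p ≠ 0` is a
nondegenerate singular point of the hypersurface `P = 0` (P and all first partials
vanish at `p`, Hessian invertible), then for suitable arbitrarily small `ε` some
first partial derivative of `P̃ = P + ∑ᵢ εᵢ xᵢ ∂P/∂xᵢ` does not vanish at `p`. -/
theorem stmt_3 (n : ℕ) (P : MvPolynomial (Fin n) ℝ) (p : Fin n → ℝ)
    (hp : p ≠ 0)
    (h0 : eval p P = 0)
    (h1 : ∀ i, eval p (pderiv i P) = 0)
    (hH : IsUnit (Matrix.of fun i j : Fin n => eval p (pderiv i (pderiv j P))).det) :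
    ∀ δ : ℝ, 0 < δ → ∃ ε : Fin n → ℝ, (∀ i, |ε i| < δ) ∧
      ∃ j : Fin n,
        eval p (pderiv j (P + ∑ i : Fin n, C (ε i) * X i * pderiv i P)) ≠ 0 := by
  intro δ hδ
  obtain ⟨k, hk⟩ : ∃ k, p k ≠ 0 := Function.ne_iff.mp hp
  set ε : Fin n → ℝ := fun i => if i = k then δ/2 else 0 with hε
  refine ⟨ε, ?_, ?_⟩
  · intro i
    by_cases h : i = k <;> simp [hε, h, abs_of_pos, half_pos hδ, hδ]
  · have key : ∀ j, eval p (pderiv j (P + ∑ i : Fin n, C (ε i) * X i * pderiv i P))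
        = δ/2 * (p k * eval p (pderiv j (pderiv k P))) := by
      intro j
      rw [map_add, map_sum, map_add, h1]
      rw [Finset.sum_eq_single k]
      · simp [hε, pderiv_mul, pderiv_X, h1, Pi.single_apply]
        rcases eq_or_ne k j with h | h <;> simp [h, h1] <;> ring
      · intro i _ hi
        simp [hε, hi]
      · simp
    have hdet : (Matrix.of fun i j : Fin n => eval p (pderiv i (pderiv j P))).det ≠ 0 :=
      hH.ne_zero
    by_contra hcon
    push_neg at hcon
    apply hdet
    apply Matrix.det_eq_zero_of_column_eq_zero k
    intro j
    have := hcon j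
    rw [key j] at this
    have : p k * eval p (pderiv j (pderiv k P)) = 0 := by
      rcases mul_eq_zero.mp this with h | h
      · linarith
      · exact h
    simp only [Matrix.of_apply]
    rcases mul_eq_zero.mp this with h | h
    · exact absurd h hk
    · exact h
end
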